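/- Let n ≥ 1 and 0 ≤ p ≤ n be integers, and let d : {1,…,n} → ℝ. Write D = ∑_i d_i and Q = ∑_i d_i². Then ∑_{|I|=p} (∑_j sgn_I(j) d_j)² = (C(n,p) − 4C(n−2,p−1))·D² + 4C(n−2,p−1)·Q. -/

import Mathlib

/-- Binomial coefficient with the convention `C a b = 0` if `b < 0` or `b > a`. -/
def C (a b : ℤ) : ℤ := if 0 ≤ b ∧ b ≤ a then (a.toNat.choose b.toNat : ℤ) else 0

/-- `sgn_I(j) = 1` if `j ∈ I` and `-1` otherwise. -/
def sgn {n : ℕ} (I : Finset (Fin n)) (j : Fin n) : ℝ := if j ∈ I then 1 else -1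

/-!
Expanding the square turns the left side into the quadratic form `∑ j k, c j k * d j * d k` with
`c j k = ∑ I, sgn I j * sgn I k`. On the diagonal `c j j = C(n, p)`. For `j ≠ k` the product of signs
is `-1` exactly when `I` separates `j` and `k`, and each of the two ways of separating them is
realised by `C(n - 2, p - 1)` sets `I`, so `c j k = C(n, p) - 4 C(n - 2, p - 1)`.
-/

open Finset

theorem C_of_nonneg {a b : ℤ} (ha : 0 ≤ a) (hb : 0 ≤ b) : C a b = a.toNat.choose b.toNat := by
  unfold C
  split_ifs with h
  · rfl
  · rw [Nat.choose_eq_zero_of_lt (by omega), Nat.cast_zero]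

theorem C_natCast (a b : ℕ) : C a b = a.choose b := by
  simp [C_of_nonneg]

theorem C_neg_right (a : ℤ) {b : ℤ} (hb : b < 0) : C a b = 0 := by
  unfold C
  rw [if_neg (by omega)]

section

variable {α R ι : Type*}

theorem sum_sq_sum_mul_eq_sum_sum [CommSemiring R] [Fintype ι] (P : Finset α) (w : α → ι → R)
    (x : ι → R) :
    ∑ I ∈ P, (∑ j, w I j * x j) ^ 2 = ∑ j, ∑ k, (∑ I ∈ P, w I j * w I k) * (x j * x k) := by
  simp_rw [sq, sum_mul_sum, sum_mul]
  rw [sum_comm]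
  refine sum_congr rfl fun j _ => ?_
  rw [sum_comm]
  refine sum_congr rfl fun k _ => sum_congr rfl fun I _ => by ring

theorem sum_sum_add_ite_mul [CommSemiring R] [Fintype ι] [DecidableEq ι] (a b : R) (x : ι → R) :
    ∑ j, ∑ k, (a + if j = k then b else 0) * (x j * x k) =
      a * (∑ i, x i) ^ 2 + b * ∑ i, x i ^ 2 := by
  simp_rw [add_mul, sum_add_distrib, ite_mul, zero_mul, sum_ite_eq, mem_univ, if_true, sq,
    sum_mul_sum, mul_sum]

theorem card_filter_mem_notMem_powersetCard [DecidableEq α] {s : Finset α} {j k : α}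
    (hj : j ∈ s) (hk : k ∈ s) (hjk : j ≠ k) {p : ℕ} (hp : 1 ≤ p) :
    #{I ∈ s.powersetCard p | j ∈ I ∧ k ∉ I} = (#s - 2).choose (p - 1) := by
  have : {I ∈ s.powersetCard p | j ∈ I ∧ k ∉ I} =
      {I ∈ (s.erase k).powersetCard p | {j} ⊆ I} := by
    ext I
    simp only [mem_filter, mem_powersetCard, singleton_subset_iff, subset_erase]
    tauto
  rw [this, card_filter_powersetCard_subset _ _ _ (by simpa [hjk]) (by simpa),
    card_erase_of_mem hk, card_singleton, Nat.sub_sub]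

end

theorem sgn_mul_sgn {n : ℕ} (I : Finset (Fin n)) (j k : Fin n) :
    sgn I j * sgn I k =
      1 - 2 * (if j ∈ I ∧ k ∉ I then 1 else 0) - 2 * (if k ∈ I ∧ j ∉ I then 1 else 0) := by
  unfold sgn
  split_ifs <;> simp_all <;> norm_num

theorem card_filter_mem_notMem_powersetCard_univ {n p : ℕ} {j k : Fin n} (hjk : j ≠ k) :
    (#{I ∈ powersetCard p univ | j ∈ I ∧ k ∉ I} : ℤ) = C (n - 2) (p - 1) := by
  rcases Nat.eq_zero_or_pos p with rfl | hp
  · simp [C_neg_right]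
  · have hn : 2 ≤ n := by
      simpa [Nat.succ_le_iff] using Fintype.one_lt_card_iff_nontrivial.2 ⟨⟨j, k, hjk⟩⟩
    rw [card_filter_mem_notMem_powersetCard (mem_univ j) (mem_univ k) hjk hp,
      C_of_nonneg (by omega) (by omega)]
    simp only [card_univ, Fintype.card_fin]
    congr <;> omega

theorem sum_sgn_mul_sgn {n : ℕ} (p : ℕ) (j k : Fin n) :
    ∑ I ∈ powersetCard p univ, sgn I j * sgn I k =
      (C n p - 4 * C (n - 2) (p - 1) : ℝ) + if j = k then 4 * (C (n - 2) (p - 1) : ℝ) else 0 := by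
  simp_rw [sgn_mul_sgn, sum_sub_distrib, ← mul_sum, sum_boole, sum_const, card_powersetCard,
    card_univ, Fintype.card_fin, C_natCast, nsmul_one]
  split_ifs with hjk
  · subst hjk; simp
  · have h1 : (#{I ∈ powersetCard p univ | j ∈ I ∧ k ∉ I} : ℝ) = C (n - 2) (p - 1) := by
      exact_mod_cast card_filter_mem_notMem_powersetCard_univ hjk
    have h2 : (#{I ∈ powersetCard p univ | k ∈ I ∧ j ∉ I} : ℝ) = C (n - 2) (p - 1) := by
      exact_mod_cast card_filter_mem_notMem_powersetCard_univ (Ne.symm hjk)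
    rw [h1, h2]
    push_cast
    ring

theorem stmt15_general (n p : ℕ) (d : Fin n → ℝ) :
    ∑ I ∈ Finset.powersetCard p (Finset.univ : Finset (Fin n)),
        (∑ j, sgn I j * d j) ^ 2 =
      ((C (n : ℤ) (p : ℤ) : ℝ) - 4 * (C ((n : ℤ) - 2) ((p : ℤ) - 1) : ℝ)) * (∑ i, d i) ^ 2 +
        4 * (C ((n : ℤ) - 2) ((p : ℤ) - 1) : ℝ) * (∑ i, d i ^ 2) := by
  simp_rw [sum_sq_sum_mul_eq_sum_sum, sum_sgn_mul_sgn, sum_sum_add_ite_mul]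

theorem stmt15 (n p : ℕ) (hn : 1 ≤ n) (hp : p ≤ n) (d : Fin n → ℝ) :
    ∑ I ∈ Finset.powersetCard p (Finset.univ : Finset (Fin n)),
        (∑ j, sgn I j * d j) ^ 2 =
      ((C (n : ℤ) (p : ℤ) : ℝ) - 4 * (C ((n : ℤ) - 2) ((p : ℤ) - 1) : ℝ)) * (∑ i, d i) ^ 2 +
        4 * (C ((n : ℤ) - 2) ((p : ℤ) - 1) : ℝ) * (∑ i, d i ^ 2) :=
  stmt15_general n p d
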